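/- In the 1-dimensional Setup, suppose additionally that there exists θ ∈ [a,b] with θ > θ_SL and c(θ_SL, θ) = 1, and let θ₀ ∈ (a,b] be the unique point with Γ(θ₀) = 1/2. Then for every p ∈ (0,1) and every θ ∈ [a,b] with θ < θ_SL or θ ≥ θ₀, the point θ_SL is the unique global minimizer over [a,b] of θ' ↦ L_p(θ,θ'): for all θ' ∈ [a,b] with θ' ≠ θ_SL one has L_p(θ, θ_SL) < L_p(θ, θ'). (This is the mechanism behind the oscillation of repeated risk minimization between θ_SL and a threshold above θ_SL.) -/

import Mathlib

open MeasureTheory Set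

/-- Best response of an agent with features `x` to the threshold classifier `1{· ≥ θ}`
under a cost function `c` with utility `γ = 1` for positive classification. -/
noncomputable def bestResponse (c : ℝ → ℝ → ℝ) (θ x : ℝ) : ℝ :=
  if θ ≤ x then x else if c x θ ≤ 1 then θ else x

/-- Risk of the threshold `θ'` on the base (non-strategic) population. -/
noncomputable def nonStrategicRisk (β : Measure ℝ) (μ : ℝ → ℝ) (θ' : ℝ) : ℝ :=
  ∫ x, (if θ' ≤ x then 1 - μ x else μ x) ∂β

/-- Decoupled performative risk of the threshold `θ'` on the distribution induced by
deploying `θ` against agents following standard microfoundations. -/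
noncomputable def smRisk (β : Measure ℝ) (μ : ℝ → ℝ) (c : ℝ → ℝ → ℝ) (θ θ' : ℝ) : ℝ :=
  ∫ x, (if θ' ≤ bestResponse c θ x then 1 - μ x else μ x) ∂β

/-- Decoupled performative risk for a mixture of a `p` fraction of non-strategic agents
and a `1 - p` fraction of agents following standard microfoundations. -/
noncomputable def mixRisk (β : Measure ℝ) (μ : ℝ → ℝ) (c : ℝ → ℝ → ℝ) (p θ θ' : ℝ) : ℝ :=
  p * nonStrategicRisk β μ θ' + (1 - p) * smRisk β μ c θ θ'

/-- `θ` is locally (performatively) stable: it is a local minimum on `[a,b]` of the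
decoupled performative risk `θ' ↦ L_p(θ, θ')`, or that map is differentiable at `θ`
with derivative `0`. -/
def LocallyStable (β : Measure ℝ) (μ : ℝ → ℝ) (c : ℝ → ℝ → ℝ) (a b p θ : ℝ) : Prop :=
  IsLocalMinOn (fun θ' => mixRisk β μ c p θ θ') (Icc a b) θ ∨
    HasDerivAt (fun θ' => mixRisk β μ c p θ θ') 0 θ

/-- The set of agents who game to the threshold `θ`. -/
def Qset (c : ℝ → ℝ → ℝ) (a b θ : ℝ) : Set ℝ := {x | x ∈ Icc a b ∧ x < θ ∧ c x θ ≤ 1}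

/-- Average of `μ` over the gaming set `Q(θ)`. -/
noncomputable def Gam (β : Measure ℝ) (μ : ℝ → ℝ) (c : ℝ → ℝ → ℝ) (a b θ : ℝ) : ℝ :=
  (∫ x in Qset c a b θ, μ x ∂β) / (β (Qset c a b θ)).toReal

/-!
Write the risk of labelling a set `S` positive as `∫ μ dβ + ∫_S (1 - 2μ) dβ`. As `μ` crosses
`1/2` at `θSL`, the half-line `[θSL, ∞)` minimises the second term over all sets, strictly among
half-lines since `β` has a positive density; this settles the non-strategic part.

Against best responses to `θ`, the positive set of `θ'` is `[θ', ∞) ∪ Q(θ)` for `θ' ≤ θ` and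
`[θ', ∞)` otherwise. For `θ < θSL` the threshold `θSL` sees no gaming and is optimal. For
`θ ≥ θ₀` the average of `μ` over `Q(θ)` is still at least `Γ(θ₀) = 1/2`, so the gaming agents
contribute `∫_{Q(θ)} (1 - 2μ) dβ ≤ 0` and `θSL`, which keeps them, stays optimal.
-/

theorem setIntegral_pos_of_forall_pos {X : Type*} [MeasurableSpace X] {ν : Measure X}
    {h : X → ℝ} {U : Set X} (hU : MeasurableSet U) (hh : IntegrableOn h U ν)
    (hpos : ∀ x ∈ U, 0 < h x) (hνU : 0 < ν U) : 0 < ∫ x in U, h x ∂ν := by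
  rw [setIntegral_pos_iff_support_of_nonneg_ae
    ((ae_restrict_mem hU).mono fun x hx => (hpos x hx).le) hh]
  rwa [(inter_eq_right (s := Function.support h)).2 fun x hx => (hpos x hx).ne']

/-- The risk of the classifier `1_S` is `∫ μ dβ + riskExcess β μ S`. -/
noncomputable def riskExcess (β : Measure ℝ) (μ : ℝ → ℝ) (S : Set ℝ) : ℝ :=
  ∫ x in S, (1 - 2 * μ x) ∂β

def gamingSet (c : ℝ → ℝ → ℝ) (θ : ℝ) : Set ℝ := {x | x < θ ∧ c x θ ≤ 1}

theorem measurableSet_gamingSet {c : ℝ → ℝ → ℝ} {θ : ℝ} (hc : Measurable fun x => c x θ) :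
    MeasurableSet (gamingSet c θ) :=
  measurableSet_Iio.inter (measurableSet_le hc measurable_const)

theorem measurableSet_Qset {c : ℝ → ℝ → ℝ} {a b θ : ℝ} (hc : Measurable fun x => c x θ) :
    MeasurableSet (Qset c a b θ) :=
  measurableSet_Icc.inter (measurableSet_gamingSet hc)

theorem setOf_le_bestResponse_of_le {c : ℝ → ℝ → ℝ} {θ θ' : ℝ} (h : θ' ≤ θ) :
    {x | θ' ≤ bestResponse c θ x} = Ici θ' ∪ gamingSet c θ := by
  ext x
  simp only [bestResponse, gamingSet, mem_ofPred_eq, mem_union, mem_Ici]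
  split_ifs with h₁ h₂ <;> grind

theorem setOf_le_bestResponse_of_lt {c : ℝ → ℝ → ℝ} {θ θ' : ℝ} (h : θ < θ') :
    {x | θ' ≤ bestResponse c θ x} = Ici θ' := by
  ext x
  simp only [bestResponse, mem_ofPred_eq, mem_Ici]
  split_ifs <;> grind

theorem measurableSet_setOf_le_bestResponse {c : ℝ → ℝ → ℝ} {θ : ℝ}
    (hc : Measurable fun x => c x θ) (θ' : ℝ) :
    MeasurableSet {x | θ' ≤ bestResponse c θ x} := by
  rcases le_or_gt θ' θ with h | h
  · rw [setOf_le_bestResponse_of_le h]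
    exact measurableSet_Ici.union (measurableSet_gamingSet hc)
  · rw [setOf_le_bestResponse_of_lt h]
    exact measurableSet_Ici

section Risk

variable {β : Measure ℝ} {μ : ℝ → ℝ} {S T : Set ℝ}

theorem riskExcess_nonneg (hS : MeasurableSet S) (h : ∀ᵐ x ∂β, x ∈ S → μ x ≤ 1 / 2) :
    0 ≤ riskExcess β μ S :=
  setIntegral_nonneg_of_ae_restrict <|
    (ae_restrict_iff' hS).2 <| h.mono fun x hx hxS => by
      simp only [Pi.zero_apply]; linarith [hx hxS]

theorem riskExcess_nonpos (hS : MeasurableSet S) (h : ∀ᵐ x ∂β, x ∈ S → 1 / 2 ≤ μ x) :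
    riskExcess β μ S ≤ 0 :=
  setIntegral_nonpos_of_ae_restrict <|
    (ae_restrict_iff' hS).2 <| h.mono fun x hx hxS => by
      simp only [Pi.zero_apply]; linarith [hx hxS]

theorem riskExcess_inter_of_ae_mem {K : Set ℝ} (hK : ∀ᵐ x ∂β, x ∈ K) (S : Set ℝ) :
    riskExcess β μ (K ∩ S) = riskExcess β μ S :=
  setIntegral_congr_set <| Filter.eventuallyEq_set.2 <|
    hK.mono fun _ hx => ⟨fun h => h.2, fun h => ⟨hx, h⟩⟩

variable [IsFiniteMeasure β]

theorem integrable_one_sub_two_mul (hμ : Integrable μ β) :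
    Integrable (fun x => 1 - 2 * μ x) β :=
  (integrable_const 1).sub (hμ.const_mul 2)

theorem integral_ite_eq_add_riskExcess (hμ : Integrable μ β) (hS : MeasurableSet S)
    (P : ℝ → Prop) [DecidablePred P] (hP : ∀ x, P x ↔ x ∈ S) :
    ∫ x, (if P x then 1 - μ x else μ x) ∂β = ∫ x, μ x ∂β + riskExcess β μ S := by
  have : (fun x => if P x then 1 - μ x else μ x) =
      fun x => μ x + S.indicator (fun x => 1 - 2 * μ x) x := by
    ext x
    by_cases hx : x ∈ S
    · rw [if_pos ((hP x).2 hx), indicator_of_mem hx]; ring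
    · rw [if_neg (mt (hP x).1 hx), indicator_of_notMem hx, add_zero]
  rw [this, integral_add hμ ((integrable_one_sub_two_mul hμ).indicator hS), integral_indicator hS,
    riskExcess]

theorem nonStrategicRisk_eq (hμ : Integrable μ β) (θ' : ℝ) :
    nonStrategicRisk β μ θ' = ∫ x, μ x ∂β + riskExcess β μ (Ici θ') :=
  integral_ite_eq_add_riskExcess hμ measurableSet_Ici _ fun _ => Iff.rfl

theorem smRisk_eq {c : ℝ → ℝ → ℝ} (hμ : Integrable μ β) {θ θ' : ℝ}
    (hc : Measurable fun x => c x θ) :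
    smRisk β μ c θ θ' = ∫ x, μ x ∂β + riskExcess β μ {x | θ' ≤ bestResponse c θ x} :=
  integral_ite_eq_add_riskExcess hμ (measurableSet_setOf_le_bestResponse hc θ') _
    fun _ => Iff.rfl

theorem riskExcess_union (hμ : Integrable μ β) (hST : Disjoint S T) (hT : MeasurableSet T) :
    riskExcess β μ (S ∪ T) = riskExcess β μ S + riskExcess β μ T :=
  setIntegral_union hST hT (integrable_one_sub_two_mul hμ).integrableOn
    (integrable_one_sub_two_mul hμ).integrableOn

theorem riskExcess_inter_add_diff (hμ : Integrable μ β) (S : Set ℝ) (hT : MeasurableSet T) :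
    riskExcess β μ (S ∩ T) + riskExcess β μ (S \ T) = riskExcess β μ S :=
  integral_inter_add_sdiff hT (integrable_one_sub_two_mul hμ).integrableOn

theorem riskExcess_pos (hμ : Integrable μ β) (hS : MeasurableSet S)
    (h : ∀ᵐ x ∂β, x ∈ S → μ x ≤ 1 / 2) {U : Set ℝ} (hU : MeasurableSet U) (hUS : U ⊆ S)
    (hlt : ∀ x ∈ U, μ x < 1 / 2) (hβU : 0 < β U) : 0 < riskExcess β μ S := by
  rw [← riskExcess_inter_add_diff hμ S hU, inter_eq_right.2 hUS]
  have hpos : 0 < riskExcess β μ U :=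
    setIntegral_pos_of_forall_pos hU (integrable_one_sub_two_mul hμ).integrableOn
      (fun x hx => by linarith [hlt x hx]) hβU
  linarith [riskExcess_nonneg (hS.diff hU) (h.mono fun x hx hxd => hx hxd.1)]

theorem riskExcess_neg (hμ : Integrable μ β) (hS : MeasurableSet S)
    (h : ∀ᵐ x ∂β, x ∈ S → 1 / 2 ≤ μ x) {U : Set ℝ} (hU : MeasurableSet U) (hUS : U ⊆ S)
    (hlt : ∀ x ∈ U, 1 / 2 < μ x) (hβU : 0 < β U) : riskExcess β μ S < 0 := by
  rw [← riskExcess_inter_add_diff hμ S hU, inter_eq_right.2 hUS]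
  have hneg : 0 < ∫ x in U, -(1 - 2 * μ x) ∂β :=
    setIntegral_pos_of_forall_pos hU (integrable_one_sub_two_mul hμ).neg.integrableOn
      (fun x hx => by linarith [hlt x hx]) hβU
  rw [integral_neg] at hneg
  change 0 < -riskExcess β μ U at hneg
  linarith [riskExcess_nonpos (hS.diff hU) (h.mono fun x hx hxd => hx hxd.1)]

theorem riskExcess_eq_measureReal_sub (hμ : Integrable μ β) (S : Set ℝ) :
    riskExcess β μ S = β.real S - 2 * ∫ x in S, μ x ∂β := by
  rw [riskExcess, integral_sub (integrable_const 1) (hμ.integrableOn.const_mul 2),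
    integral_const_mul, setIntegral_const, smul_eq_mul, mul_one]

theorem riskExcess_eq_zero_of_average_eq_half (hμ : Integrable μ β)
    (h : (∫ x in S, μ x ∂β) / (β S).toReal = 1 / 2) : riskExcess β μ S = 0 := by
  have hβS : (β S).toReal ≠ 0 := fun h0 => by norm_num [h0] at h
  rw [div_eq_iff hβS] at h
  rw [riskExcess_eq_measureReal_sub hμ, h, measureReal_def]
  ring

theorem riskExcess_nonpos_of_separated (hμ : Integrable μ β) {L M : Set ℝ}
    (hL : MeasurableSet L) (hM : MeasurableSet M) (hLM : Disjoint L M) {s : ℝ}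
    (hsL : ∀ x ∈ L, μ x ≤ s) (hsM : ∀ y ∈ M, s ≤ μ y) (h0 : riskExcess β μ (L ∪ M) = 0) :
    riskExcess β μ M ≤ 0 := by
  rw [riskExcess_union hμ hLM hM] at h0
  have hJL : (1 - 2 * s) * β.real L ≤ riskExcess β μ L := by
    have := setIntegral_mono_on integrableOn_const (integrable_one_sub_two_mul hμ).integrableOn
      hL fun x hx => (by linarith [hsL x hx] : 1 - 2 * s ≤ 1 - 2 * μ x)
    rwa [setIntegral_const, smul_eq_mul, mul_comm] at this
  have hJM : riskExcess β μ M ≤ (1 - 2 * s) * β.real M := by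
    have := setIntegral_mono_on (integrable_one_sub_two_mul hμ).integrableOn integrableOn_const
      hM fun y hy => (by linarith [hsM y hy] : 1 - 2 * μ y ≤ 1 - 2 * s)
    rwa [setIntegral_const, smul_eq_mul, mul_comm] at this
  -- `s ≤ 1/2` makes the integral over `L` nonnegative, `s ≥ 1/2` the one over `M` nonpositive.
  rcases le_or_gt 0 (1 - 2 * s) with hs | hs
  · nlinarith [measureReal_nonneg (μ := β) (s := L)]
  · nlinarith [measureReal_nonneg (μ := β) (s := M)]

end Risk

section Threshold

variable {β : Measure ℝ} [IsFiniteMeasure β] {μ : ℝ → ℝ} (hμ : Integrable μ β) {θSL : ℝ}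
  (hlow : ∀ᵐ x ∂β, x < θSL → μ x ≤ 1 / 2) (hhigh : ∀ᵐ x ∂β, θSL ≤ x → 1 / 2 ≤ μ x)
include hμ hlow hhigh

theorem riskExcess_le_riskExcess {S T : Set ℝ} (hS : MeasurableSet S) (hT : MeasurableSet T)
    (hTS : T \ S ⊆ Ici θSL) (hST : S \ T ⊆ Iio θSL) : riskExcess β μ T ≤ riskExcess β μ S := by
  rw [← riskExcess_inter_add_diff hμ T hS, ← riskExcess_inter_add_diff hμ S hT, inter_comm]
  linarith [riskExcess_nonpos (hT.diff hS) (hhigh.mono fun x hx hxd => hx (hTS hxd)),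
    riskExcess_nonneg (hS.diff hT) (hlow.mono fun x hx hxd => hx (hST hxd))]

theorem riskExcess_Ici_le {S : Set ℝ} (hS : MeasurableSet S) :
    riskExcess β μ (Ici θSL) ≤ riskExcess β μ S :=
  riskExcess_le_riskExcess hμ hlow hhigh hS measurableSet_Ici (fun _ hx => hx.1)
    fun _ hx => mem_Iio.2 (not_le.1 hx.2)

theorem riskExcess_Ici_lt {a b : ℝ} (hSL : θSL ∈ Icc a b) (hmono : StrictMonoOn μ (Icc a b))
    (hhalf : μ θSL = 1 / 2) (hβ : ∀ u v, a ≤ u → u < v → v ≤ b → 0 < β (Ioo u v))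
    {u : ℝ} (hu : u ∈ Icc a b) (hne : u ≠ θSL) :
    riskExcess β μ (Ici θSL) < riskExcess β μ (Ici u) := by
  rcases hne.lt_or_gt with h | h
  · rw [← Ico_union_Ici_eq_Ici h.le, riskExcess_union hμ
      ((Iio_disjoint_Ici le_rfl).mono_left Ico_subset_Iio_self) measurableSet_Ici]
    have := riskExcess_pos hμ measurableSet_Ico (hlow.mono fun x hx hxI => hx hxI.2)
      measurableSet_Ioo Ioo_subset_Ico_self
      (fun x hx => hhalf ▸ hmono ⟨hu.1.trans hx.1.le, hx.2.le.trans hSL.2⟩ hSL hx.2)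
      (hβ u θSL hu.1 h hSL.2)
    linarith
  · rw [← Ico_union_Ici_eq_Ici h.le, riskExcess_union hμ
      ((Iio_disjoint_Ici le_rfl).mono_left Ico_subset_Iio_self) measurableSet_Ici]
    have := riskExcess_neg hμ measurableSet_Ico (hhigh.mono fun x hx hxI => hx hxI.1)
      measurableSet_Ioo Ioo_subset_Ico_self
      (fun x hx => hhalf ▸ hmono hSL ⟨hSL.1.trans hx.1.le, hx.2.le.trans hu.2⟩ hx.1)
      (hβ θSL u hSL.1 h hu.2)
    linarith

/-- Labelling the gaming agents positive does not increase the risk (`hQ`), and `θSL ≤ θ` does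
label them positive; beyond that the comparison is the non-strategic one. -/
theorem riskExcess_setOf_le_bestResponse_le {c : ℝ → ℝ → ℝ} {θ : ℝ}
    (hc : Measurable fun x => c x θ) (hθ : θSL ≤ θ) (hQ : riskExcess β μ (gamingSet c θ) ≤ 0)
    (θ' : ℝ) :
    riskExcess β μ {x | θSL ≤ bestResponse c θ x} ≤
      riskExcess β μ {x | θ' ≤ bestResponse c θ x} := by
  have hQm := measurableSet_gamingSet hc
  rw [setOf_le_bestResponse_of_le hθ]
  rcases le_or_gt θ' θ with h | h
  · rw [setOf_le_bestResponse_of_le h]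
    refine riskExcess_le_riskExcess hμ hlow hhigh (measurableSet_Ici.union hQm)
      (measurableSet_Ici.union hQm) ?_ ?_
    · rintro x ⟨hx | hx, hxS⟩
      exacts [hx, absurd (Or.inr hx) hxS]
    · rintro x ⟨_, hxT⟩
      exact mem_Iio.2 (not_le.1 fun hx => hxT (Or.inl hx))
  · rw [setOf_le_bestResponse_of_lt h, union_comm, ← union_sdiff_self,
      riskExcess_union hμ disjoint_sdiff_right (measurableSet_Ici.diff hQm)]
    have := riskExcess_le_riskExcess hμ hlow hhigh measurableSet_Ici
      (measurableSet_Ici.diff hQm) (fun x hx => hx.1.1) fun x hx => by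
        by_contra! hxSL
        exact hx.2 ⟨mem_Ici.2 (not_lt.1 hxSL), fun hxQ => (hxQ.1.trans h).not_ge hx.1⟩
    linarith

end Threshold

section Gaming

variable {c : ℝ → ℝ → ℝ} {a b : ℝ}
  (hc : ∀ x xP z : ℝ, min x xP < z → z < max x xP → c x z < c x xP ∧ c z x < c xP x)
include hc

theorem mem_Qset_of_le_of_mem {t x y : ℝ} (hy : y ∈ Qset c a b t) (hx : x ∈ Icc a b)
    (hyx : y ≤ x) (hxt : x < t) : x ∈ Qset c a b t := by
  refine ⟨hx, hxt, ?_⟩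
  rcases hyx.eq_or_lt with rfl | hlt
  · exact hy.2.2
  · exact ((hc t y x ((min_le_right t y).trans_lt hlt)
      (hxt.trans_le (le_max_left t y))).2.trans_le hy.2.2).le

theorem mem_Qset_of_lt_of_le {s t x : ℝ} (hx : x ∈ Qset c a b t) (hxs : x < s) (hst : s ≤ t) :
    x ∈ Qset c a b s := by
  refine ⟨hx.1, hxs, ?_⟩
  rcases hst.eq_or_lt with rfl | hlt
  · exact hx.2.2
  · exact ((hc x t s ((min_le_left x t).trans_lt hxs)
      (hlt.trans_le (le_max_right x t))).1.trans_le hx.2.2).le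

variable {β : Measure ℝ} [IsFiniteMeasure β] {μ : ℝ → ℝ}

/-- Raising the threshold from `θ₀` to `t` drops gaming agents only at the bottom of `Q(θ₀)`,
where `μ` is smallest, and adds ones at or above `θ₀ ≥ θSL`, where `μ ≥ 1/2`; so the average
of `μ` over the gaming set stays at least `1/2`. -/
theorem riskExcess_Qset_nonpos (hμ : Integrable μ β) (hmono : MonotoneOn μ (Icc a b))
    (hQ : ∀ t, MeasurableSet (Qset c a b t)) {θSL : ℝ}
    (hhigh : ∀ᵐ x ∂β, θSL ≤ x → 1 / 2 ≤ μ x) {θ₀ t : ℝ} (hSL : θSL ≤ θ₀)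
    (h0 : riskExcess β μ (Qset c a b θ₀) = 0) (ht : θ₀ ≤ t) :
    riskExcess β μ (Qset c a b t) ≤ 0 := by
  set A := Qset c a b θ₀
  set B := Qset c a b t
  have hkept : riskExcess β μ (A ∩ B) ≤ 0 := by
    rcases (A ∩ B).eq_empty_or_nonempty with hM | hM
    · simp [hM, riskExcess]
    have hbdd : BddBelow (A ∩ B) := ⟨a, fun y hy => hy.1.1.1⟩
    have hr : sInf (A ∩ B) ∈ Icc a b :=
      ⟨le_csInf hM fun y hy => hy.1.1.1, (csInf_le hbdd hM.some_mem).trans hM.some_mem.1.1.2⟩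
    refine riskExcess_nonpos_of_separated hμ ((hQ θ₀).diff (hQ t)) ((hQ θ₀).inter (hQ t))
      disjoint_sdiff_inter (s := μ (sInf (A ∩ B))) (fun x hx => hmono hx.1.1 hr ?_)
      (fun y hy => hmono hr hy.1.1 (csInf_le hbdd hy)) (by rwa [sdiff_union_inter])
    refine le_csInf hM fun y hy => not_lt.1 fun hyx => hx.2 ?_
    exact mem_Qset_of_le_of_mem hc hy.2 hx.1.1 hyx.le (hx.1.2.1.trans_le ht)
  have hadded : riskExcess β μ (B \ A) ≤ 0 :=
    riskExcess_nonpos ((hQ t).diff (hQ θ₀)) <| hhigh.mono fun x hx hxd => hx <|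
      not_lt.1 fun hxSL => hxd.2 (mem_Qset_of_lt_of_le hc hxd.1 (hxSL.trans_le hSL) ht)
  rw [← riskExcess_inter_add_diff hμ B (hQ θ₀), inter_comm]
  linarith

end Gaming

theorem le_of_riskExcess_Qset_eq_zero {β : Measure ℝ} [IsFiniteMeasure β] {μ : ℝ → ℝ}
    (hμ : Integrable μ β) {c : ℝ → ℝ → ℝ} {a b θSL θ₀ : ℝ} (hSL : θSL ∈ Icc a b)
    (hmono : StrictMonoOn μ (Icc a b)) (hhalf : μ θSL = 1 / 2)
    (hQ : MeasurableSet (Qset c a b θ₀)) (hβQ : β (Qset c a b θ₀) ≠ 0)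
    (h0 : riskExcess β μ (Qset c a b θ₀) = 0) : θSL ≤ θ₀ := by
  by_contra! h
  have hlt : ∀ x ∈ Qset c a b θ₀, μ x < 1 / 2 := fun x hx =>
    hhalf ▸ hmono hx.1 hSL (hx.2.1.trans h)
  have := riskExcess_pos hμ hQ (ae_of_all _ fun x hx => (hlt x hx).le) hQ subset_rfl hlt
    (pos_iff_ne_zero.2 hβQ)
  linarith

section Density

variable {a b : ℝ}

theorem ae_mem_Icc_withDensity (f : ℝ → ENNReal) :
    ∀ᵐ x ∂(volume.restrict (Icc a b)).withDensity f, x ∈ Icc a b :=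
  (withDensity_absolutelyContinuous _ _).ae_le (ae_restrict_mem measurableSet_Icc)

theorem withDensity_Ioo_pos {g : ℝ → ℝ} (hg_cont : ContinuousOn g (Icc a b))
    (hg_pos : ∀ x ∈ Icc a b, 0 < g x) {u v : ℝ} (hu : a ≤ u) (huv : u < v) (hv : v ≤ b) :
    0 < ((volume.restrict (Icc a b)).withDensity fun x => ENNReal.ofReal (g x)) (Ioo u v) := by
  rw [pos_iff_ne_zero, Ne, withDensity_apply_eq_zero'
    (hg_cont.aemeasurable measurableSet_Icc).ennreal_ofReal,
    Measure.restrict_apply' measurableSet_Icc]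
  have hsub : Ioo u v ⊆ Icc a b := Ioo_subset_Icc_self.trans (Icc_subset_Icc hu hv)
  have : {x | ENNReal.ofReal (g x) ≠ 0} ∩ Ioo u v ∩ Icc a b = Ioo u v := by
    rw [inter_eq_left.2 (inter_subset_right.trans hsub)]
    exact inter_eq_right.2 fun x hx => (ENNReal.ofReal_pos.2 (hg_pos x (hsub hx))).ne'
  rw [this, Real.volume_Ioo, ENNReal.ofReal_eq_zero, not_le, sub_pos]
  exact huv

theorem integrable_of_ae_mem_Icc {β : Measure ℝ} [IsFiniteMeasure β] {μ : ℝ → ℝ}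
    (hae : ∀ᵐ x ∂β, x ∈ Icc a b) (hμ : ContinuousOn μ (Icc a b)) : Integrable μ β := by
  have := hμ.integrableOn_compact (μ := β) isCompact_Icc
  rwa [IntegrableOn, Measure.restrict_eq_self_of_ae_mem hae] at this

end Density

theorem stmt5_general
    (a b : ℝ)
    (c : ℝ → ℝ → ℝ) (hc_cont : Continuous fun p : ℝ × ℝ => c p.1 p.2)
    (hc_between : ∀ x xP z : ℝ, min x xP < z → z < max x xP →
      c x z < c x xP ∧ c z x < c xP x)
    (g : ℝ → ℝ) (hg_cont : ContinuousOn g (Icc a b)) (hg_pos : ∀ x ∈ Icc a b, 0 < g x)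
    (β : Measure ℝ)
    (hβ : β = (volume.restrict (Icc a b)).withDensity fun x => ENNReal.ofReal (g x))
    (hβprob : IsProbabilityMeasure β)
    (μ : ℝ → ℝ) (hμ_cont : ContinuousOn μ (Icc a b)) (hμ_mono : StrictMonoOn μ (Icc a b))
    (θSL : ℝ) (hθSL : θSL ∈ Ioo a b) (hhalf : μ θSL = 1/2)
    (θ₀ : ℝ) (hθ₀Γ : Gam β μ c a b θ₀ = 1/2) :
    ∀ p ∈ Ioo (0:ℝ) 1, ∀ θ ∈ Icc a b, (θ < θSL ∨ θ₀ ≤ θ) →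
      ∀ θ' ∈ Icc a b, θ' ≠ θSL →
        mixRisk β μ c p θ θSL < mixRisk β μ c p θ θ' := by
  have hSL : θSL ∈ Icc a b := Ioo_subset_Icc_self hθSL
  have hae : ∀ᵐ x ∂β, x ∈ Icc a b := hβ ▸ ae_mem_Icc_withDensity _
  have hμ : Integrable μ β := integrable_of_ae_mem_Icc hae hμ_cont
  have hlow : ∀ᵐ x ∂β, x < θSL → μ x ≤ 1 / 2 :=
    hae.mono fun x hx h => hhalf ▸ hμ_mono.monotoneOn hx hSL h.le
  have hhigh : ∀ᵐ x ∂β, θSL ≤ x → 1 / 2 ≤ μ x :=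
    hae.mono fun x hx h => hhalf ▸ hμ_mono.monotoneOn hSL hx h
  have hc : ∀ θ, Measurable fun x => c x θ := fun θ =>
    (hc_cont.comp (continuous_id.prodMk continuous_const)).measurable
  have hQ : ∀ θ, MeasurableSet (Qset c a b θ) := fun θ => measurableSet_Qset (hc θ)
  have hA : riskExcess β μ (Qset c a b θ₀) = 0 := riskExcess_eq_zero_of_average_eq_half hμ hθ₀Γ
  have hθ₀ : θSL ≤ θ₀ := le_of_riskExcess_Qset_eq_zero hμ hSL hμ_mono hhalf (hQ θ₀)
    (fun h0 => by simp [Gam, h0] at hθ₀Γ) hA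
  intro p hp θ _ hθ θ' hθ' hne
  have hNS := riskExcess_Ici_lt hμ hlow hhigh hSL hμ_mono hhalf
    (fun u v hu huv hv => hβ ▸ withDensity_Ioo_pos hg_cont hg_pos hu huv hv) hθ' hne
  have hSM : riskExcess β μ {x | θSL ≤ bestResponse c θ x} ≤
      riskExcess β μ {x | θ' ≤ bestResponse c θ x} := by
    rcases lt_or_ge θ θSL with h | h
    · rw [setOf_le_bestResponse_of_lt h]
      exact riskExcess_Ici_le hμ hlow hhigh (measurableSet_setOf_le_bestResponse (hc θ) θ')
    · refine riskExcess_setOf_le_bestResponse_le hμ hlow hhigh (hc θ) h ?_ θ'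
      exact (riskExcess_inter_of_ae_mem hae _).symm.trans_le <| riskExcess_Qset_nonpos
        hc_between hμ hμ_mono.monotoneOn hQ hhigh hθ₀ hA (hθ.resolve_left h.not_gt)
  simp only [mixRisk, nonStrategicRisk_eq hμ, smRisk_eq hμ (hc θ)]
  linarith [mul_lt_mul_of_pos_left hNS hp.1, mul_le_mul_of_nonneg_left hSM (sub_nonneg.2 hp.2.le)]

/-- Proposition 2(c) (mechanism of the oscillation of repeated risk
minimization): for any p ∈ (0,1) and any deployed θ with θ < θ_SL or θ ≥ θ₀, the unique
global minimizer of θ' ↦ L_p(θ,θ') over [a,b] is θ_SL. -/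
theorem stmt5
    (a b : ℝ) (hab : a < b)
    (c : ℝ → ℝ → ℝ) (hc_cont : Continuous fun p : ℝ × ℝ => c p.1 p.2)
    (hc_zero : ∀ x, c x x = 0)
    (hc_between : ∀ x xP z : ℝ, min x xP < z → z < max x xP →
      c x z < c x xP ∧ c z x < c xP x)
    (g : ℝ → ℝ) (hg_cont : ContinuousOn g (Icc a b)) (hg_pos : ∀ x ∈ Icc a b, 0 < g x)
    (β : Measure ℝ)
    (hβ : β = (volume.restrict (Icc a b)).withDensity fun x => ENNReal.ofReal (g x))
    (hβprob : IsProbabilityMeasure β)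
    (μ : ℝ → ℝ) (hμ_cont : ContinuousOn μ (Icc a b)) (hμ_mono : StrictMonoOn μ (Icc a b))
    (hμ_range : ∀ x ∈ Icc a b, μ x ∈ Icc (0:ℝ) 1)
    (θSL : ℝ) (hθSL : θSL ∈ Ioo a b) (hhalf : μ θSL = 1/2)
    (hexists : ∃ θ ∈ Icc a b, θSL < θ ∧ c θSL θ = 1)
    (θ₀ : ℝ) (hθ₀mem : θ₀ ∈ Ioc a b) (hθ₀Γ : Gam β μ c a b θ₀ = 1/2)
    (hθ₀uniq : ∀ θ₁ ∈ Ioc a b, Gam β μ c a b θ₁ = 1/2 → θ₁ = θ₀) :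
    ∀ p ∈ Ioo (0:ℝ) 1, ∀ θ ∈ Icc a b, (θ < θSL ∨ θ₀ ≤ θ) →
      ∀ θ' ∈ Icc a b, θ' ≠ θSL →
        mixRisk β μ c p θ θSL < mixRisk β μ c p θ θ' :=
  stmt5_general a b c hc_cont hc_between g hg_cont hg_pos β hβ hβprob μ hμ_cont hμ_mono θSL hθSL
    hhalf θ₀ hθ₀Γ
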